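/- For every δ ∈ (0,1] there exists a constant C = C(δ) > 0 such that for all t ≥ 1, every nonzero integer k, and all ξ, η ∈ ℝ: ⟨t⟩(⟨t⟩ + |(k,ξ)|)/(|k|·⟨ξ/k⟩²) ≤ C · ⟨t⟩(⟨t⟩ + |(k,η)|)/(|k|·⟨η/k⟩²) · exp( δ · ( min(⟨ξ−η⟩, ⟨k,η⟩) )^{1/2} ). -/

import Mathlib

/-- Japanese bracket `⟨a⟩ = (1 + a²)^{1/2}` of a real number. -/
noncomputable def jb (a : ℝ) : ℝ := Real.sqrt (1 + a ^ 2)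

/-- Double Japanese bracket `⟨k,η⟩ = (1 + k² + η²)^{1/2}`. -/
noncomputable def jb2 (k : ℤ) (η : ℝ) : ℝ := Real.sqrt (1 + (k : ℝ) ^ 2 + η ^ 2)

lemma jb_one_le (a : ℝ) : 1 ≤ jb a := by
  have := Real.sqrt_le_sqrt (show (1:ℝ) ≤ 1 + a ^ 2 by nlinarith [sq_nonneg a])
  rwa [Real.sqrt_one] at this

lemma jb_sq (a : ℝ) : jb a ^ 2 = 1 + a ^ 2 :=
  Real.sq_sqrt (by positivity)

lemma abs_le_jb (a : ℝ) : |a| ≤ jb a := by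
  rw [jb, ← Real.sqrt_sq_eq_abs]
  exact Real.sqrt_le_sqrt (by nlinarith)

lemma den_eq (k x : ℝ) (hk : k ≠ 0) : |k| * (jb (x/k))^2 = (k^2+x^2)/|k| := by
  have h : |k| ≠ 0 := abs_ne_zero.mpr hk
  have hksq : |k|^2 = k^2 := sq_abs k
  rw [jb_sq, eq_div_iff h, div_pow]
  field_simp
  linear_combination hksq

lemma tri (a b c : ℝ) :
    Real.sqrt (a ^ 2 + b ^ 2) ≤ Real.sqrt (a ^ 2 + c ^ 2) + |b - c| := by
  set S := Real.sqrt (a ^ 2 + c ^ 2) with hS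
  have hS0 : 0 ≤ S := Real.sqrt_nonneg _
  have hSsq : S ^ 2 = a ^ 2 + c ^ 2 := Real.sq_sqrt (by positivity)
  have hc : |c| ≤ S := by
    rw [hS, ← Real.sqrt_sq_eq_abs]
    exact Real.sqrt_le_sqrt (by nlinarith)
  have habs : c * (b - c) ≤ |c| * |b - c| := by
    rw [← abs_mul]; exact le_abs_self _
  rw [show S + |b - c| = Real.sqrt ((S + |b - c|) ^ 2) from
    (Real.sqrt_sq (by positivity)).symm]
  apply Real.sqrt_le_sqrt
  have h1 : |c| * |b - c| ≤ S * |b - c| :=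
    mul_le_mul_of_nonneg_right hc (abs_nonneg _)
  have h2 : |b - c| ^ 2 = (b - c) ^ 2 := sq_abs _
  nlinarith [habs, h1]

lemma poly_le (δ x : ℝ) (hδ : 0 < δ) (hx : 1 ≤ x) :
    x ^ 3 ≤ 46656 / δ ^ 6 * Real.exp (δ * Real.sqrt x) := by
  have hs : 0 ≤ Real.sqrt x := Real.sqrt_nonneg x
  have hy : 0 ≤ δ * Real.sqrt x / 6 := by positivity
  have h1 : δ * Real.sqrt x / 6 ≤ Real.exp (δ * Real.sqrt x / 6) :=
    le_trans (by linarith) (Real.add_one_le_exp _)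
  have h2 : (δ * Real.sqrt x / 6) ^ 6 ≤ Real.exp (δ * Real.sqrt x / 6) ^ 6 :=
    pow_le_pow_left₀ hy h1 6
  have h3 : Real.exp (δ * Real.sqrt x / 6) ^ 6 = Real.exp (δ * Real.sqrt x) := by
    rw [← Real.exp_nat_mul]
    congr 1
    push_cast
    ring
  have hxs : Real.sqrt x ^ 2 = x := Real.sq_sqrt (by linarith)
  have h6 : Real.sqrt x ^ 6 = x ^ 3 := by
    rw [show (6:ℕ) = 2 * 3 from rfl, pow_mul, hxs]
  have h4 : (δ * Real.sqrt x / 6) ^ 6 = δ ^ 6 * x ^ 3 / 46656 := by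
    rw [div_pow, mul_pow, h6]; norm_num
  have h5 : δ ^ 6 * x ^ 3 / 46656 ≤ Real.exp (δ * Real.sqrt x) := by
    rw [← h3, ← h4]; exact h2
  have hδ6 : (0:ℝ) < δ ^ 6 := by positivity
  rw [div_mul_eq_mul_div, le_div_iff₀ hδ6]
  nlinarith [h5]

lemma key_ineq (T Sξ Sη D N : ℝ) (hT : 1 ≤ T) (hSξ : 1 ≤ Sξ) (hSη : 1 ≤ Sη)
    (hD : 1 ≤ D) (hN : 1 ≤ N) (h1 : Sξ ≤ Sη + D) (h2 : Sη ≤ Sξ + D)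
    (hsq : Sη ^ 2 ≤ N ^ 2) :
    (T + Sξ) * Sη ^ 2 ≤ 8 * (min D N) ^ 3 * ((T + Sη) * Sξ ^ 2) := by
  rcases le_total D N with h | h
  · rw [min_eq_left h]
    have step1 : T + Sξ ≤ 2 * D * (T + Sη) := by nlinarith
    have h2d : Sη ≤ 2 * D * Sξ := by nlinarith
    have step2 : Sη ^ 2 ≤ 4 * D ^ 2 * Sξ ^ 2 := by nlinarith
    calc (T + Sξ) * Sη ^ 2 ≤ (2 * D * (T + Sη)) * (4 * D ^ 2 * Sξ ^ 2) :=
          mul_le_mul step1 step2 (by positivity) (by nlinarith)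
      _ = 8 * D ^ 3 * ((T + Sη) * Sξ ^ 2) := by ring
  · rw [min_eq_right h]
    have step1 : T + Sξ ≤ 2 * T * Sξ := by nlinarith
    have hA : T * Sξ ≤ (T + Sη) * Sξ ^ 2 := by nlinarith
    have hB : N ^ 2 ≤ N ^ 3 := by nlinarith
    calc (T + Sξ) * Sη ^ 2 ≤ (2 * T * Sξ) * N ^ 2 :=
          mul_le_mul step1 hsq (by positivity) (by nlinarith)
      _ ≤ (2 * ((T + Sη) * Sξ ^ 2)) * N ^ 3 :=
          mul_le_mul (by linarith) hB (by positivity) (by nlinarith)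
      _ ≤ 8 * (N ^ 3) * ((T + Sη) * Sξ ^ 2) := by nlinarith

lemma assemble (T K Sξ Sη m C E : ℝ)
    (hkey : (T + Sξ) * Sη ^ 2 ≤ 8 * m ^ 3 * ((T + Sη) * Sξ ^ 2))
    (hexp : 8 * m ^ 3 ≤ C * E)
    (hT : 0 ≤ T) (hK : 0 ≤ K) (hSξ : 0 ≤ Sξ) (hSη : 0 ≤ Sη) :
    T * (T + Sξ) * K * Sη ^ 2 ≤ C * (T * (T + Sη) * K) * E * Sξ ^ 2 := by
  have hTK : 0 ≤ T * K := mul_nonneg hT hK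
  have hX : 0 ≤ T * K * ((T + Sη) * Sξ ^ 2) :=
    mul_nonneg hTK (mul_nonneg (by linarith) (sq_nonneg _))
  have h5 : T * K * ((T + Sξ) * Sη ^ 2) ≤ T * K * (8 * m ^ 3 * ((T + Sη) * Sξ ^ 2)) :=
    mul_le_mul_of_nonneg_left hkey hTK
  have h6 : 8 * m ^ 3 * (T * K * ((T + Sη) * Sξ ^ 2))
      ≤ (C * E) * (T * K * ((T + Sη) * Sξ ^ 2)) :=
    mul_le_mul_of_nonneg_right hexp hX
  nlinarith [h5, h6]

theorem stmt11 (δ : ℝ) (hδ : δ ∈ Set.Ioc (0 : ℝ) 1) :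
    ∃ C : ℝ, 0 < C ∧ ∀ (t : ℝ), 1 ≤ t → ∀ (k : ℤ), k ≠ 0 → ∀ ξ η : ℝ,
    jb t * (jb t + Real.sqrt ((k : ℝ) ^ 2 + ξ ^ 2)) /
        (|(k : ℝ)| * (jb (ξ / (k : ℝ))) ^ 2) ≤
      C * (jb t * (jb t + Real.sqrt ((k : ℝ) ^ 2 + η ^ 2)) /
            (|(k : ℝ)| * (jb (η / (k : ℝ))) ^ 2)) *
        Real.exp (δ * Real.sqrt (min (jb (ξ - η)) (jb2 k η))) := by
  obtain ⟨hδ0, hδ1⟩ := hδ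
  refine ⟨8 * 46656 / δ ^ 6, by positivity, ?_⟩
  intro t ht k hk ξ η
  have hk0 : ((k:ℝ)) ≠ 0 := Int.cast_ne_zero.mpr hk
  have hK1 : (1:ℝ) ≤ |(k:ℝ)| := by
    rw [← Int.cast_abs]
    exact_mod_cast Int.one_le_abs hk
  have hK0 : (0:ℝ) < |(k:ℝ)| := lt_of_lt_of_le one_pos hK1
  set K : ℝ := |(k:ℝ)| with hKdef
  set T : ℝ := jb t with hTdef
  set Sξ : ℝ := Real.sqrt ((k:ℝ) ^ 2 + ξ ^ 2) with hSξdef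
  set Sη : ℝ := Real.sqrt ((k:ℝ) ^ 2 + η ^ 2) with hSηdef
  set D : ℝ := jb (ξ - η) with hDdef
  set N : ℝ := jb2 k η with hNdef
  set m : ℝ := min D N with hmdef
  set E : ℝ := Real.exp (δ * Real.sqrt m) with hEdef
  have hT : 1 ≤ T := jb_one_le t
  have hksq : K ^ 2 = (k:ℝ) ^ 2 := sq_abs _
  have hk21 : (1:ℝ) ≤ (k:ℝ) ^ 2 := by nlinarith
  have hSξsq : Sξ ^ 2 = (k:ℝ) ^ 2 + ξ ^ 2 := Real.sq_sqrt (by positivity)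
  have hSηsq : Sη ^ 2 = (k:ℝ) ^ 2 + η ^ 2 := Real.sq_sqrt (by positivity)
  have hSξ0 : 0 ≤ Sξ := Real.sqrt_nonneg _
  have hSη0 : 0 ≤ Sη := Real.sqrt_nonneg _
  have hSξ1 : 1 ≤ Sξ := by nlinarith [sq_nonneg ξ]
  have hSη1 : 1 ≤ Sη := by nlinarith [sq_nonneg η]
  have hD1 : 1 ≤ D := jb_one_le _
  have hNsq : N ^ 2 = 1 + (k:ℝ) ^ 2 + η ^ 2 := by
    rw [hNdef, jb2]; exact Real.sq_sqrt (by positivity)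
  have hN0 : 0 ≤ N := Real.sqrt_nonneg _
  have hN1 : 1 ≤ N := by nlinarith [sq_nonneg η]
  have hm1 : 1 ≤ m := le_min hD1 hN1
  -- triangle inequalities
  have htri1 : Sξ ≤ Sη + D := by
    refine le_trans (tri (k:ℝ) ξ η) ?_
    have := abs_le_jb (ξ - η)
    linarith
  have htri2 : Sη ≤ Sξ + D := by
    refine le_trans (tri (k:ℝ) η ξ) ?_
    have h := abs_le_jb (ξ - η)
    rw [abs_sub_comm] at h
    linarith
  have hsqN : Sη ^ 2 ≤ N ^ 2 := by rw [hSηsq, hNsq]; linarith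
  have hkey : (T + Sξ) * Sη ^ 2 ≤ 8 * m ^ 3 * ((T + Sη) * Sξ ^ 2) :=
    key_ineq T Sξ Sη D N hT hSξ1 hSη1 hD1 hN1 htri1 htri2 hsqN
  have hexp : 8 * m ^ 3 ≤ 8 * 46656 / δ ^ 6 * E := by
    have h := poly_le δ m hδ0 hm1
    have he : 8 * 46656 / δ ^ 6 * E = 8 * (46656 / δ ^ 6 * Real.exp (δ * Real.sqrt m)) := by
      rw [hEdef]; ring
    rw [he]; linarith
  -- rewrite denominators
  have hden : ∀ x : ℝ, K * (jb (x / (k:ℝ))) ^ 2 = ((k:ℝ) ^ 2 + x ^ 2) / K :=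
    fun x => den_eq (k:ℝ) x hk0
  rw [hden ξ, hden η, div_div_eq_mul_div, div_div_eq_mul_div]
  have hSξ2 : (0:ℝ) < (k:ℝ) ^ 2 + ξ ^ 2 := by positivity
  have hSη2 : (0:ℝ) < (k:ℝ) ^ 2 + η ^ 2 := by positivity
  rw [show 8 * 46656 / δ ^ 6 * (T * (T + Sη) * K / ((k:ℝ) ^ 2 + η ^ 2)) * E
      = 8 * 46656 / δ ^ 6 * (T * (T + Sη) * K) * E / ((k:ℝ) ^ 2 + η ^ 2) by ring]
  rw [div_le_div_iff₀ hSξ2 hSη2, ← hSξsq, ← hSηsq]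
  exact assemble T K Sξ Sη m (8 * 46656 / δ ^ 6) E hkey hexp (by linarith)
    (by linarith) hSξ0 hSη0
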